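/- Conversely, any run of the VASS over-approximation N that never 'cheats' a zero-test corresponds to a genuine 2CM run: if N reads a word w from q(0,0) such that every maximal occurrence of z_i z_i in w is taken with counter i equal to zero at that moment, then the 2CM M has a run performing the corresponding operation sequence (with doubled z_i's collapsed to single z_i operations). -/

import Mathlib

/-- Operations of a two-counter machine. -/
inductive Op : Type
  | inc1 | inc2 | dec1 | dec2 | z1 | z2
deriving DecidableEq

/-- One step of a two-counter machine with transition relation `δ`:
`inc_i`/`dec_i` increment/decrement counter `i` (decrement needs positivity),
`z_i` is enabled only when counter `i` is zero and leaves the counters unchanged. -/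
def CMStep {Q : Type} (δ : Q → Op → Q → Prop) :
    Q × ℕ × ℕ → Op → Q × ℕ × ℕ → Prop :=
  fun c op c' =>
    match op with
    | .inc1 => δ c.1 .inc1 c'.1 ∧ c'.2.1 = c.2.1 + 1 ∧ c'.2.2 = c.2.2
    | .inc2 => δ c.1 .inc2 c'.1 ∧ c'.2.1 = c.2.1 ∧ c'.2.2 = c.2.2 + 1
    | .dec1 => δ c.1 .dec1 c'.1 ∧ c.2.1 = c'.2.1 + 1 ∧ c'.2.2 = c.2.2
    | .dec2 => δ c.1 .dec2 c'.1 ∧ c'.2.1 = c.2.1 ∧ c.2.2 = c'.2.2 + 1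
    | .z1 => δ c.1 .z1 c'.1 ∧ c.2.1 = 0 ∧ c'.2 = c.2
    | .z2 => δ c.1 .z2 c'.1 ∧ c.2.2 = 0 ∧ c'.2 = c.2

/-- A run of a two-counter machine over a sequence of operations. -/
inductive CMRun {Q : Type} (δ : Q → Op → Q → Prop) :
    Q × ℕ × ℕ → List Op → Q × ℕ × ℕ → Prop
  | nil (c : Q × ℕ × ℕ) : CMRun δ c [] c
  | cons {c c' c'' : Q × ℕ × ℕ} {op : Op} {ops : List Op} :
      CMStep δ c op c' → CMRun δ c' ops c'' → CMRun δ c (op :: ops) c''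

/-- States of the VASS over-approximation `N` of a 2CM: the states of the
machine plus a fresh auxiliary state for each zero-test transition. -/
abbrev NState (Q : Type) : Type := Q ⊕ (Q × Op × Q)

/-- One labelled step of the VASS `N` built from the 2CM with transitions `δ`:
`inc`/`dec` transitions are kept (same counter effects), and each zero-test
transition over `z_i` is replaced by two consecutive transitions over letter
`z_i` with zero counter effect, through the fresh intermediate state. -/
inductive NStep {Q : Type} (δ : Q → Op → Q → Prop) :
    NState Q × ℕ × ℕ → Op → NState Q × ℕ × ℕ → Prop
  | inc1 {q q' : Q} {x y : ℕ} : δ q .inc1 q' →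
      NStep δ (.inl q, x, y) .inc1 (.inl q', x + 1, y)
  | inc2 {q q' : Q} {x y : ℕ} : δ q .inc2 q' →
      NStep δ (.inl q, x, y) .inc2 (.inl q', x, y + 1)
  | dec1 {q q' : Q} {x y : ℕ} : δ q .dec1 q' →
      NStep δ (.inl q, x + 1, y) .dec1 (.inl q', x, y)
  | dec2 {q q' : Q} {x y : ℕ} : δ q .dec2 q' →
      NStep δ (.inl q, x, y + 1) .dec2 (.inl q', x, y)
  | zin {q q' : Q} {x y : ℕ} {op : Op} : (op = .z1 ∨ op = .z2) → δ q op q' →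
      NStep δ (.inl q, x, y) op (.inr (q, op, q'), x, y)
  | zout {q q' : Q} {x y : ℕ} {op : Op} : (op = .z1 ∨ op = .z2) → δ q op q' →
      NStep δ (.inr (q, op, q'), x, y) op (.inl q', x, y)

/-- A run of the VASS `N` reading a word. -/
inductive NRun {Q : Type} (δ : Q → Op → Q → Prop) :
    NState Q × ℕ × ℕ → List Op → NState Q × ℕ × ℕ → Prop
  | nil (c : NState Q × ℕ × ℕ) : NRun δ c [] c
  | cons {c c' c'' : NState Q × ℕ × ℕ} {op : Op} {w : List Op} :
      NStep δ c op c' → NRun δ c' w c'' → NRun δ c (op :: w) c''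

/-- The word obtained from an operation sequence by doubling each `z_i`. -/
def doubleZ : List Op → List Op
  | [] => []
  | .z1 :: w => .z1 :: .z1 :: doubleZ w
  | .z2 :: w => .z2 :: .z2 :: doubleZ w
  | op :: w => op :: doubleZ w

/-- A non-cheating run of the VASS over-approximation `N`: a run in which every
zero-test gadget (`z_i z_i` pair, i.e. every visit of an auxiliary state) is
taken with counter `i` equal to zero at that moment. -/
inductive NCRun {Q : Type} (δ : Q → Op → Q → Prop) :
    NState Q × ℕ × ℕ → List Op → NState Q × ℕ × ℕ → Prop
  | nil (c : NState Q × ℕ × ℕ) : NCRun δ c [] c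
  | cons {c c' c'' : NState Q × ℕ × ℕ} {op : Op} {w : List Op} :
      NStep δ c op c' →
      (∀ p r x y, c' = (.inr (p, .z1, r), x, y) → x = 0) →
      (∀ p r x y, c' = (.inr (p, .z2, r), x, y) → y = 0) →
      NCRun δ c' w c'' → NCRun δ c (op :: w) c''

/-- In an auxiliary state the first `z_i` of the gadget has already been read, so it is put back
in front of the remaining word; the zero test is owed by the step that entered the gadget. -/
def CollapsesTo {Q : Type} (δ : Q → Op → Q → Prop) (e : Q × ℕ × ℕ) :
    NState Q × ℕ × ℕ → List Op → Prop
  | (.inl q, x, y), w => ∃ ops, doubleZ ops = w ∧ CMRun δ (q, x, y) ops e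
  | (.inr (p, op, _), x, y), w => (op = .z1 → x = 0) → (op = .z2 → y = 0) →
      ∃ ops, doubleZ ops = op :: w ∧ CMRun δ (p, x, y) ops e

theorem NCRun.collapsesTo {Q : Type} {δ : Q → Op → Q → Prop} {c : NState Q × ℕ × ℕ}
    {w : List Op} {q' : Q} {x' y' : ℕ} (h : NCRun δ c w (.inl q', x', y')) :
    CollapsesTo δ (q', x', y') c w := by
  generalize he : ((.inl q', x', y') : NState Q × ℕ × ℕ) = e at h
  induction h with
  | nil => subst he; exact ⟨[], rfl, .nil _⟩
  | cons step zero₁ zero₂ _ ih =>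
    specialize ih he
    cases step with
    | inc1 hδ =>
      obtain ⟨ops, rfl, run⟩ := ih
      exact ⟨.inc1 :: ops, rfl, .cons (by exact ⟨hδ, rfl, rfl⟩) run⟩
    | inc2 hδ =>
      obtain ⟨ops, rfl, run⟩ := ih
      exact ⟨.inc2 :: ops, rfl, .cons (by exact ⟨hδ, rfl, rfl⟩) run⟩
    | dec1 hδ =>
      obtain ⟨ops, rfl, run⟩ := ih
      exact ⟨.dec1 :: ops, rfl, .cons (by exact ⟨hδ, rfl, rfl⟩) run⟩
    | dec2 hδ =>
      obtain ⟨ops, rfl, run⟩ := ih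
      exact ⟨.dec2 :: ops, rfl, .cons (by exact ⟨hδ, rfl, rfl⟩) run⟩
    | zin _ _ =>
      exact ih (fun h => zero₁ _ _ _ _ (by rw [h])) (fun h => zero₂ _ _ _ _ (by rw [h]))
    | zout hop hδ =>
      obtain ⟨ops, rfl, run⟩ := ih
      intro hx hy
      rcases hop with rfl | rfl
      · exact ⟨.z1 :: ops, rfl, .cons (by exact ⟨hδ, hx rfl, rfl⟩) run⟩
      · exact ⟨.z2 :: ops, rfl, .cons (by exact ⟨hδ, hy rfl, rfl⟩) run⟩

/-- Non-cheating runs of `N` from `q(0, 0)` (ending in a state of the machine)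
project to genuine 2CM runs: the word read is of the form `doubleZ ops` and the
machine can perform the operation sequence `ops`. -/
theorem ncRun_to_cmRun {Q : Type} (δ : Q → Op → Q → Prop)
    (q q' : Q) (x' y' : ℕ) (w : List Op)
    (h : NCRun δ (.inl q, 0, 0) w (.inl q', x', y')) :
    ∃ ops : List Op, doubleZ ops = w ∧ CMRun δ (q, 0, 0) ops (q', x', y') :=
  h.collapsesTo
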